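/- If σ is an n×n Hermitian unitary matrix anticommuting with Σ = diag(I_{m_+}, 0, −I_{m_-}), then necessarily m_+ = m_- = (n−1)/2, and σ has the anti-block-diagonal form with blocks σ_{+-} and σ_{-+} (in the corner positions) that are unitary and adjoints of each other, with middle entry σ_{00} = ±1 and all other blocks zero. -/

import Mathlib

/-!
Writing `Σ = diagonal d`, anticommutation says `σ i j * (d i + d j) = 0`, so `σ` can be nonzero
only on the corner blocks `(+,-)`, `(-,+)` and at the middle entry. Since `σ = σᴴ` is unitary,
`σ * σ = 1`; the support of `σ` makes the `(+,+)` and `(-,-)` blocks of `σ * σ` equal to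
`σ₊₋ σ₋₊` and `σ₋₊ σ₊₋`, where `σ₋₊ = σ₊₋ᴴ`. So `σ₊₋` is unitary, its two Gram matrices have the
same trace `m₊ = m₋`, and the middle entry of `σ * σ` is `σ₀₀ ^ 2 = 1`.
-/

open Matrix

namespace Matrix

variable {l m n o p q R : Type*}

theorem submatrix_mul_of_injective [Fintype n] [Fintype o] [NonUnitalNonAssocSemiring R]
    (M : Matrix m n R) (N : Matrix n p R) (e₁ : l → m) (e₂ : o → n) (e₃ : q → p)
    (he₂ : Function.Injective e₂) (hM : ∀ i k, k ∉ Set.range e₂ → M (e₁ i) k = 0) :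
    (M * N).submatrix e₁ e₃ = M.submatrix e₁ e₂ * N.submatrix e₂ e₃ :=
  ext fun i _ => (Fintype.sum_of_injective e₂ he₂ _ _
    (fun k hk => mul_eq_zero_of_left (hM i k hk) _) fun _ => rfl).symm

theorem apply_eq_zero_of_mul_diagonal_eq_neg [Fintype m] [DecidableEq m] [CommRing R]
    [NoZeroDivisors R] {M : Matrix m m R} {d : m → R} (h : M * diagonal d = -(diagonal d * M))
    {i j : m} (hij : d i + d j ≠ 0) : M i j = 0 := by
  have hij' := congr_fun₂ h i j
  simp only [mul_diagonal, diagonal_mul, neg_apply] at hij'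
  exact (mul_eq_zero.mp (by linear_combination hij' : M i j * (d i + d j) = 0)).resolve_right hij

theorem card_eq_of_mul_eq_one_of_mul_eq_one [Fintype m] [Fintype n] [DecidableEq m]
    [DecidableEq n] [CommRing R] [CharZero R] {A : Matrix m n R} {B : Matrix n m R}
    (hAB : A * B = 1) (hBA : B * A = 1) : Fintype.card m = Fintype.card n := by
  have h := trace_mul_comm A B
  rw [hAB, hBA, trace_one, trace_one] at h
  exact_mod_cast h

end Matrix

namespace BlockSign

variable {R : Type*} (mp mm : ℕ)

def sign [Ring R] (i : Fin (mp + 1 + mm)) : R :=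
  if i.val < mp then 1 else if i.val = mp then 0 else -1

def posIdx : Fin mp → Fin (mp + 1 + mm) := Fin.castLE (by omega)

def negIdx : Fin mm → Fin (mp + 1 + mm) := Fin.natAdd (mp + 1)

def midIdx : Fin (mp + 1 + mm) := Fin.castLE (Nat.le_add_right _ _) (Fin.last mp)

variable {mp mm}

theorem posIdx_injective : Function.Injective (posIdx mp mm) := Fin.castLE_injective _

theorem negIdx_injective : Function.Injective (negIdx mp mm) := Fin.natAdd_injective _ _

theorem corner_or_mid_of_sign_add_sign_eq_zero [Ring R] [CharZero R] {i j : Fin (mp + 1 + mm)}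
    (h : sign mp mm i + sign mp mm j = (0 : R)) :
    (i.val < mp ∧ mp < j.val) ∨ (mp < i.val ∧ j.val < mp) ∨ (i.val = mp ∧ j.val = mp) := by
  unfold sign at h
  split_ifs at h <;> first | omega | norm_num at h

section Anticommute

variable [CommRing R] [NoZeroDivisors R] [CharZero R]
  {σ : Matrix (Fin (mp + 1 + mm)) (Fin (mp + 1 + mm)) R}
  (h : σ * diagonal (sign mp mm) = -(diagonal (sign mp mm) * σ))
include h

theorem corner_or_mid_of_apply_ne_zero {i j : Fin (mp + 1 + mm)} (hij : σ i j ≠ 0) :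
    (i.val < mp ∧ mp < j.val) ∨ (mp < i.val ∧ j.val < mp) ∨ (i.val = mp ∧ j.val = mp) := by
  by_contra hsupp
  exact hij (apply_eq_zero_of_mul_diagonal_eq_neg h fun hs =>
    hsupp (corner_or_mid_of_sign_add_sign_eq_zero hs))

variable (hsq : σ * σ = 1)
include hsq

theorem submatrix_posIdx_negIdx_mul_eq_one :
    σ.submatrix (posIdx mp mm) (negIdx mp mm) * σ.submatrix (negIdx mp mm) (posIdx mp mm) = 1 := by
  rw [← submatrix_mul_of_injective _ _ _ _ _ negIdx_injective fun i k hk => ?_, hsq,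
    submatrix_one _ posIdx_injective]
  by_contra hik
  have hcorner := corner_or_mid_of_apply_ne_zero h hik
  rw [negIdx, Fin.range_natAdd] at hk
  simp only [posIdx, Fin.val_castLE, Set.mem_ofPred_eq] at hcorner hk
  omega

theorem submatrix_negIdx_posIdx_mul_eq_one :
    σ.submatrix (negIdx mp mm) (posIdx mp mm) * σ.submatrix (posIdx mp mm) (negIdx mp mm) = 1 := by
  rw [← submatrix_mul_of_injective _ _ _ _ _ posIdx_injective fun i k hk => ?_, hsq,
    submatrix_one _ negIdx_injective]
  by_contra hik
  have hcorner := corner_or_mid_of_apply_ne_zero h hik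
  rw [posIdx, Fin.range_castLE] at hk
  simp only [negIdx, Fin.val_natAdd, Set.mem_ofPred_eq] at hcorner hk
  omega

theorem apply_midIdx_mul_self_eq_one :
    σ (midIdx mp mm) (midIdx mp mm) * σ (midIdx mp mm) (midIdx mp mm) = 1 := by
  rw [← one_apply_eq (α := R) (midIdx mp mm), ← hsq, mul_apply,
    Fintype.sum_eq_single (midIdx mp mm) fun k hk => ?_]
  by_contra hik
  have hmid := corner_or_mid_of_apply_ne_zero h (left_ne_zero_of_mul hik)
  simp only [midIdx, Fin.val_castLE, Fin.val_last] at hmid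
  exact hk (Fin.ext (by simp only [midIdx, Fin.val_castLE, Fin.val_last]; omega))

end Anticommute

end BlockSign

/-- if `σ` is an `n × n` Hermitian unitary matrix anticommuting with
`Σ = diag(I_{m₊}, 0, −I_{m₋})` (so `n = m₊ + 1 + m₋`), then necessarily
`m₊ = m₋ = (n−1)/2`, and `σ` has the anti-block-diagonal form with corner blocks
`σ₊₋` and `σ₋₊` that are unitary and adjoints of each other, middle entry
`σ₀₀ = ±1`, and all other blocks zero. -/
theorem hermitian_unitary_anticommuting_is_antidiagonal
    (mp mm : ℕ)
    (Sigma σ : Matrix (Fin (mp + 1 + mm)) (Fin (mp + 1 + mm)) ℂ)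
    (hSigma : Sigma = Matrix.diagonal
      (fun i => if i.val < mp then 1 else if i.val = mp then 0 else -1))
    (hherm : σᴴ = σ) (hunit : σ * σᴴ = 1) (hanticomm : σ * Sigma = -(Sigma * σ)) :
    -- the sizes of the two blocks must coincide:
    mp = mm ∧
    -- all blocks other than the two corner blocks and the middle entry vanish:
    (∀ i j : Fin (mp + 1 + mm),
      ¬(i.val < mp ∧ mp < j.val) → ¬(mp < i.val ∧ j.val < mp) →
      ¬(i.val = mp ∧ j.val = mp) → σ i j = 0) ∧
    -- σ₋₊ is the adjoint of σ₊₋: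
    ((Matrix.of fun i j => σ ⟨mp + 1 + i.val, by omega⟩ ⟨j.val, by omega⟩ :
        Matrix (Fin mm) (Fin mp) ℂ)
      = (Matrix.of fun i j => σ ⟨i.val, by omega⟩ ⟨mp + 1 + j.val, by omega⟩ :
        Matrix (Fin mp) (Fin mm) ℂ)ᴴ) ∧
    -- σ₊₋ is unitary:
    ((Matrix.of fun i j => σ ⟨i.val, by omega⟩ ⟨mp + 1 + j.val, by omega⟩ :
        Matrix (Fin mp) (Fin mm) ℂ) *
      (Matrix.of fun i j => σ ⟨i.val, by omega⟩ ⟨mp + 1 + j.val, by omega⟩ :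
        Matrix (Fin mp) (Fin mm) ℂ)ᴴ = 1 ∧
     (Matrix.of fun i j => σ ⟨i.val, by omega⟩ ⟨mp + 1 + j.val, by omega⟩ :
        Matrix (Fin mp) (Fin mm) ℂ)ᴴ *
      (Matrix.of fun i j => σ ⟨i.val, by omega⟩ ⟨mp + 1 + j.val, by omega⟩ :
        Matrix (Fin mp) (Fin mm) ℂ) = 1) ∧
    -- the middle entry σ₀₀ is ±1:
    (σ ⟨mp, by omega⟩ ⟨mp, by omega⟩ = 1 ∨ σ ⟨mp, by omega⟩ ⟨mp, by omega⟩ = -1) := by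
  subst hSigma
  change σ * diagonal (BlockSign.sign mp mm) = -(diagonal (BlockSign.sign mp mm) * σ) at hanticomm
  have hsq : σ * σ = 1 := by rwa [hherm] at hunit
  set A := σ.submatrix (BlockSign.posIdx mp mm) (BlockSign.negIdx mp mm)
  have hadj : σ.submatrix (BlockSign.negIdx mp mm) (BlockSign.posIdx mp mm) = Aᴴ := by
    rw [conjTranspose_submatrix, hherm]
  have hAAH : A * Aᴴ = 1 := hadj ▸ BlockSign.submatrix_posIdx_negIdx_mul_eq_one hanticomm hsq
  have hAHA : Aᴴ * A = 1 := hadj ▸ BlockSign.submatrix_negIdx_posIdx_mul_eq_one hanticomm hsq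
  refine ⟨by simpa using card_eq_of_mul_eq_one_of_mul_eq_one hAAH hAHA,
    fun i j h₁ h₂ h₃ => ?_, hadj, ⟨hAAH, hAHA⟩,
    mul_self_eq_one_iff.mp (BlockSign.apply_midIdx_mul_self_eq_one hanticomm hsq)⟩
  by_contra hij
  have := BlockSign.corner_or_mid_of_apply_ne_zero hanticomm hij
  tauto
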